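/- Restriction to connected subpartitions: for a finite weighted graph (G,μ,σ), the k-way Cheeger constant h_k^σ = min over nontrivial k-subpartitions {S₁,…,S_k} of max_i φ^σ(Sᵢ) is unchanged if the minimum is taken only over nontrivial k-subpartitions in which every induced subgraph on Sᵢ is connected. -/

import Mathlib

open Finset Matrix

noncomputable section

variable {V : Type*} [Fintype V] [DecidableEq V]

/-- The average `(2,1)`-norm of a `d × d` matrix (average of column norms). -/
def norm21 {d : ℕ} (A : Matrix (Fin d) (Fin d) ℂ) : ℝ :=
  (1 / (d : ℝ)) * ∑ i, Real.sqrt (∑ j, ‖A j i‖ ^ 2)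

/-- The frustration index `ι^σ(S)` of a subset `S`. -/
def frust {d : ℕ} (w : V → V → ℝ) (σ : V → V → Matrix (Fin d) (Fin d) ℂ)
    (S : Finset V) : ℝ :=
  ⨅ τ : {τ : V → Matrix (Fin d) (Fin d) ℂ //
      ∀ x, τ x ∈ Matrix.unitaryGroup (Fin d) ℂ},
    (1 / 2) * ∑ x ∈ S, ∑ y ∈ S, w x y * norm21 (σ x y * τ.1 y - τ.1 x)

/-- The boundary measure `|E(S, V∖S)|`. -/
def bdry (w : V → V → ℝ) (S : Finset V) : ℝ := ∑ x ∈ S, ∑ y ∈ Sᶜ, w x y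

/-- The quantity `φ^σ(S) = (ι^σ(S) + |E(S,V∖S)|)/μ(S)`. -/
def phiS {d : ℕ} (μ : V → ℝ) (w : V → V → ℝ)
    (σ : V → V → Matrix (Fin d) (Fin d) ℂ) (S : Finset V) : ℝ :=
  (frust w σ S + bdry w S) / (∑ x ∈ S, μ x)

/-- The induced subgraph on `S` is connected. -/
def ConnOn (w : V → V → ℝ) (S : Finset V) : Prop :=
  ∀ x ∈ S, ∀ y ∈ S,
    Relation.ReflTransGen (fun a b => a ∈ S ∧ b ∈ S ∧ a ≠ b ∧ w a b ≠ 0) x y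

-- auxiliary development
section Aux
set_option linter.unusedSectionVars false

variable (w : V → V → ℝ)

/-- the edge relation on `S`. -/
def relS (S : Finset V) (a b : V) : Prop := a ∈ S ∧ b ∈ S ∧ a ≠ b ∧ w a b ≠ 0

/-- connected component of `x` in `S`. -/
def ccomp (S : Finset V) (x : V) : Finset V :=
  @Finset.filter V (Relation.ReflTransGen (relS w S) x) (Classical.decPred _) S

lemma mem_ccomp_iff {S : Finset V} {x y : V} :
    y ∈ ccomp w S x ↔ y ∈ S ∧ Relation.ReflTransGen (relS w S) x y := by
  simp [ccomp, Finset.mem_filter]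

lemma ccomp_subset (S : Finset V) (x : V) : ccomp w S x ⊆ S := by
  intro y hy
  exact ((mem_ccomp_iff w).1 hy).1

lemma mem_ccomp_self {S : Finset V} {x : V} (hx : x ∈ S) : x ∈ ccomp w S x :=
  (mem_ccomp_iff w).2 ⟨hx, Relation.ReflTransGen.refl⟩

lemma relS_symm (hw_symm : ∀ x y, w x y = w y x) (S : Finset V) :
    Symmetric (relS w S) := by
  rintro a b ⟨ha, hb, hne, hw⟩
  exact ⟨hb, ha, hne.symm, by rwa [hw_symm b a]⟩

lemma ccomp_eq_of_mem (hw_symm : ∀ x y, w x y = w y x) {S : Finset V} {x y : V}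
    (hy : y ∈ ccomp w S x) : ccomp w S x = ccomp w S y := by
  obtain ⟨hyS, hxy⟩ := (mem_ccomp_iff w).1 hy
  ext z
  simp only [mem_ccomp_iff]
  constructor
  · rintro ⟨hz, hxz⟩
    exact ⟨hz, (((@Relation.ReflTransGen.symmetric _ _ ⟨fun a b h => relS_symm w hw_symm S h⟩).symm _ _ hxy).trans hxz)⟩
  · rintro ⟨hz, hyz⟩
    exact ⟨hz, hxy.trans hyz⟩

lemma cross_zero {S : Finset V} {x₀ x y : V} (hx : x ∈ ccomp w S x₀)
    (hyS : y ∈ S) (hy : y ∉ ccomp w S x₀) : w x y = 0 := by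
  by_contra hne
  obtain ⟨hxS, hx₀x⟩ := (mem_ccomp_iff w).1 hx
  have hxy : x ≠ y := by rintro rfl; exact hy hx
  exact hy ((mem_ccomp_iff w).2 ⟨hyS, hx₀x.tail ⟨hxS, hyS, hxy, hne⟩⟩)

lemma reach_in_ccomp {S : Finset V} {x y : V}
    (h : Relation.ReflTransGen (relS w S) x y) :
    Relation.ReflTransGen (relS w (ccomp w S x)) x y := by
  induction h with
  | refl => exact Relation.ReflTransGen.refl
  | tail hxb hbc ih =>
      rename_i b c
      have hb : b ∈ ccomp w S x := (mem_ccomp_iff w).2 ⟨hbc.1, hxb⟩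
      have hc : c ∈ ccomp w S x := (mem_ccomp_iff w).2 ⟨hbc.2.1, hxb.tail hbc⟩
      exact ih.tail ⟨hb, hc, hbc.2.2.1, hbc.2.2.2⟩

lemma connOn_ccomp (hw_symm : ∀ x y, w x y = w y x) (S : Finset V) (x : V) :
    ConnOn w (ccomp w S x) := by
  intro y hy z hz
  obtain ⟨-, hxy⟩ := (mem_ccomp_iff w).1 hy
  obtain ⟨-, hxz⟩ := (mem_ccomp_iff w).1 hz
  have h1 : Relation.ReflTransGen (relS w (ccomp w S x)) x y := reach_in_ccomp w hxy
  have h2 : Relation.ReflTransGen (relS w (ccomp w S x)) x z := reach_in_ccomp w hxz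
  have hsymm : Symmetric (relS w (ccomp w S x)) := relS_symm w hw_symm _
  exact ((@Relation.ReflTransGen.symmetric _ _ ⟨fun a b h => hsymm h⟩).symm _ _ h1).trans h2

/-- the set of connected components of `S` -/
def comps (S : Finset V) : Finset (Finset V) := S.image (ccomp w S)

lemma biUnion_comps (S : Finset V) : (comps w S).biUnion id = S := by
  ext x
  simp only [Finset.mem_biUnion, comps, Finset.mem_image, id]
  constructor
  · rintro ⟨T, ⟨y, hy, rfl⟩, hx⟩
    exact ccomp_subset w S y hx
  · intro hx
    exact ⟨ccomp w S x, ⟨x, hx, rfl⟩, mem_ccomp_self w hx⟩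

lemma comps_disj (hw_symm : ∀ x y, w x y = w y x) {S : Finset V} :
    ∀ T₁ ∈ comps w S, ∀ T₂ ∈ comps w S, T₁ ≠ T₂ → Disjoint T₁ T₂ := by
  rintro T₁ h₁ T₂ h₂ hne
  obtain ⟨x₁, -, rfl⟩ := Finset.mem_image.1 h₁
  obtain ⟨x₂, -, rfl⟩ := Finset.mem_image.1 h₂
  rw [Finset.disjoint_left]
  intro z hz₁ hz₂
  exact hne ((ccomp_eq_of_mem w hw_symm hz₁).trans (ccomp_eq_of_mem w hw_symm hz₂).symm)

lemma sum_comps (hw_symm : ∀ x y, w x y = w y x) (S : Finset V) (f : V → ℝ) :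
    ∑ x ∈ S, f x = ∑ T ∈ comps w S, ∑ x ∈ T, f x := by
  conv_lhs => rw [← biUnion_comps w S]
  rw [Finset.sum_biUnion]
  · rfl
  · intro T₁ h₁ T₂ h₂ hne
    exact comps_disj w hw_symm T₁ h₁ T₂ h₂ hne

lemma comps_subset {S T : Finset V} (hT : T ∈ comps w S) : T ⊆ S := by
  obtain ⟨x₀, -, rfl⟩ := Finset.mem_image.1 hT
  exact ccomp_subset w S x₀

lemma cross_zero' {S T : Finset V} (hT : T ∈ comps w S) {x y : V}
    (hx : x ∈ T) (hyS : y ∈ S) (hy : y ∉ T) : w x y = 0 := by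
  obtain ⟨x₀, -, rfl⟩ := Finset.mem_image.1 hT
  exact cross_zero w hx hyS hy

end Aux

section Aux2
set_option linter.unusedSectionVars false

variable {d : ℕ} (μ : V → ℝ) (w : V → V → ℝ) (σ : V → V → Matrix (Fin d) (Fin d) ℂ)

lemma norm21_nonneg (A : Matrix (Fin d) (Fin d) ℂ) : 0 ≤ norm21 A :=
  mul_nonneg (by positivity) (Finset.sum_nonneg fun i _ => Real.sqrt_nonneg _)

def Fval (S : Finset V)
    (τ : {τ : V → Matrix (Fin d) (Fin d) ℂ //
      ∀ x, τ x ∈ Matrix.unitaryGroup (Fin d) ℂ}) : ℝ :=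
  (1 / 2) * ∑ x ∈ S, ∑ y ∈ S, w x y * norm21 (σ x y * τ.1 y - τ.1 x)

instance : Nonempty {τ : V → Matrix (Fin d) (Fin d) ℂ //
    ∀ x, τ x ∈ Matrix.unitaryGroup (Fin d) ℂ} :=
  ⟨⟨fun _ => 1, fun _ => one_mem _⟩⟩

lemma frust_eq (S : Finset V) : frust w σ S = ⨅ τ, Fval w σ S τ := rfl

lemma Fval_nonneg (hw_nn : ∀ x y, 0 ≤ w x y) (S : Finset V) (τ) :
    0 ≤ Fval w σ S τ :=
  mul_nonneg (by norm_num) (Finset.sum_nonneg fun x _ => Finset.sum_nonneg fun y _ =>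
    mul_nonneg (hw_nn x y) (norm21_nonneg _))

lemma Fval_bdd (hw_nn : ∀ x y, 0 ≤ w x y) (S : Finset V) :
    BddBelow (Set.range (Fval w σ S)) :=
  ⟨0, by rintro _ ⟨τ, rfl⟩; exact Fval_nonneg w σ hw_nn S τ⟩

lemma frust_nonneg (hw_nn : ∀ x y, 0 ≤ w x y) (S : Finset V) : 0 ≤ frust w σ S := by
  rw [frust_eq]
  exact le_ciInf (Fval_nonneg w σ hw_nn S)

lemma frust_le_Fval (hw_nn : ∀ x y, 0 ≤ w x y) (S : Finset V) (τ) :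
    frust w σ S ≤ Fval w σ S τ := by
  rw [frust_eq]
  exact ciInf_le (Fval_bdd w σ hw_nn S) τ

lemma Fval_split (hw_symm : ∀ x y, w x y = w y x) (S : Finset V) (τ) :
    ∑ T ∈ comps w S, Fval w σ T τ = Fval w σ S τ := by
  have hinner : ∀ T ∈ comps w S, ∀ x ∈ T,
      ∑ y ∈ T, w x y * norm21 (σ x y * τ.1 y - τ.1 x)
      = ∑ y ∈ S, w x y * norm21 (σ x y * τ.1 y - τ.1 x) := by
    intro T hT x hx
    refine Finset.sum_subset ?_ ?_
    · obtain ⟨x₀, -, rfl⟩ := Finset.mem_image.1 hT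
      exact ccomp_subset w S x₀
    · intro y hyS hyT
      rw [cross_zero' w hT hx hyS hyT, zero_mul]
  unfold Fval
  rw [← Finset.mul_sum]
  congr 1
  rw [sum_comps w hw_symm S (fun x => ∑ y ∈ S, w x y * norm21 (σ x y * τ.1 y - τ.1 x))]
  refine Finset.sum_congr rfl fun T hT => Finset.sum_congr rfl fun x hx => ?_
  exact hinner T hT x hx

lemma frust_superadd (hw_symm : ∀ x y, w x y = w y x) (hw_nn : ∀ x y, 0 ≤ w x y)
    (S : Finset V) : ∑ T ∈ comps w S, frust w σ T ≤ frust w σ S := by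
  rw [frust_eq]
  refine le_ciInf fun τ => ?_
  calc ∑ T ∈ comps w S, frust w σ T
      ≤ ∑ T ∈ comps w S, Fval w σ T τ :=
        Finset.sum_le_sum fun T _ => frust_le_Fval w σ hw_nn T τ
    _ = Fval w σ S τ := Fval_split w σ hw_symm S τ

lemma bdry_comps (hw_symm : ∀ x y, w x y = w y x) (S : Finset V) :
    ∑ T ∈ comps w S, bdry w T = bdry w S := by
  have h : ∀ T ∈ comps w S, bdry w T = ∑ x ∈ T, ∑ y ∈ Sᶜ, w x y := by
    intro T hT
    refine Finset.sum_congr rfl fun x hx => ?_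
    refine (Finset.sum_subset ?_ ?_).symm
    · intro y hy
      rw [Finset.mem_compl] at hy ⊢
      intro hyT
      exact hy (comps_subset w hT hyT)
    · intro y hyT hyS
      rw [Finset.mem_compl, not_not] at hyS
      exact cross_zero' w hT hx hyS (Finset.mem_compl.1 hyT)
  rw [Finset.sum_congr rfl h]
  exact (sum_comps w hw_symm S fun x => ∑ y ∈ Sᶜ, w x y).symm

lemma bdry_nonneg (hw_nn : ∀ x y, 0 ≤ w x y) (S : Finset V) : 0 ≤ bdry w S :=
  Finset.sum_nonneg fun x _ => Finset.sum_nonneg fun y _ => hw_nn x y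

lemma exists_good (hμ : ∀ x, 0 < μ x) (hw_symm : ∀ x y, w x y = w y x)
    (hw_nn : ∀ x y, 0 ≤ w x y) {S : Finset V} (hS : S.Nonempty) :
    ∃ T, T ⊆ S ∧ T.Nonempty ∧ ConnOn w T ∧ phiS μ w σ T ≤ phiS μ w σ S := by
  set a : Finset V → ℝ := fun T => frust w σ T + bdry w T with ha
  set m : Finset V → ℝ := fun T => ∑ x ∈ T, μ x with hm
  have hcne : (comps w S).Nonempty := ⟨ccomp w S hS.choose,
    Finset.mem_image.2 ⟨hS.choose, hS.choose_spec, rfl⟩⟩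
  have hmpos : ∀ T ∈ comps w S, 0 < m T := by
    intro T hT
    obtain ⟨x₀, hx₀, rfl⟩ := Finset.mem_image.1 hT
    exact Finset.sum_pos (fun x _ => hμ x) ⟨x₀, mem_ccomp_self w hx₀⟩
  have hMpos : 0 < m S := Finset.sum_pos (fun x _ => hμ x) hS
  have hsum_m : ∑ T ∈ comps w S, m T = m S := (sum_comps w hw_symm S μ).symm
  have hsum_a : ∑ T ∈ comps w S, a T ≤ a S := by
    rw [ha]
    simp only [Finset.sum_add_distrib]
    exact add_le_add (frust_superadd w σ hw_symm hw_nn S)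
      (le_of_eq (bdry_comps w hw_symm S))
  have key : ∃ T ∈ comps w S, a T * m S ≤ a S * m T := by
    by_contra h
    push_neg at h
    have h1 : ∑ T ∈ comps w S, a S * m T < ∑ T ∈ comps w S, a T * m S :=
      Finset.sum_lt_sum_of_nonempty hcne fun T hT => h T hT
    rw [← Finset.mul_sum, hsum_m, ← Finset.sum_mul] at h1
    nlinarith [mul_le_mul_of_nonneg_right hsum_a hMpos.le]
  obtain ⟨T, hT, hkey⟩ := key
  obtain ⟨x₀, hx₀, hTeq⟩ := Finset.mem_image.1 hT
  refine ⟨T, comps_subset w hT, ?_, ?_, ?_⟩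
  · exact ⟨x₀, by rw [← hTeq]; exact mem_ccomp_self w hx₀⟩
  · rw [← hTeq]; exact connOn_ccomp w hw_symm S x₀
  · show a T / m T ≤ a S / m S
    rw [div_le_div_iff₀ (hmpos T hT) hMpos]
    exact hkey

end Aux2

lemma phiS_nonneg {d : ℕ} (μ : V → ℝ) (w : V → V → ℝ)
    (σ : V → V → Matrix (Fin d) (Fin d) ℂ)
    (hμ : ∀ x, 0 < μ x) (hw_nn : ∀ x y, 0 ≤ w x y) (S : Finset V) :
    0 ≤ phiS μ w σ S :=
  div_nonneg (add_nonneg (frust_nonneg w σ hw_nn S) (bdry_nonneg w hw_nn S))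
    (Finset.sum_nonneg fun x _ => (hμ x).le)

/-- The `k`-way Cheeger constant is unchanged if the minimum is restricted to
nontrivial `k`-subpartitions with connected pieces. -/
theorem cheeger_connected_subpartitions
    {d : ℕ} (μ : V → ℝ) (w : V → V → ℝ)
    (σ : V → V → Matrix (Fin d) (Fin d) ℂ)
    (hμ : ∀ x, 0 < μ x)
    (hw_symm : ∀ x y, w x y = w y x)
    (hw_nn : ∀ x y, 0 ≤ w x y)
    (hw_loop : ∀ x, w x x = 0)
    (hσu : ∀ x y, σ x y ∈ Matrix.unitaryGroup (Fin d) ℂ)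
    (hσs : ∀ x y, σ y x = (σ x y)ᴴ)
    (k : ℕ) (hk : 0 < k) (hk' : k ≤ Fintype.card V) :
    (⨅ P : {S : Fin k → Finset V //
        (∀ i, (S i).Nonempty) ∧
        ∀ i j, i ≠ j → Disjoint (S i) (S j)},
      ⨆ i, phiS μ w σ (P.1 i)) =
    (⨅ P : {S : Fin k → Finset V //
        (∀ i, (S i).Nonempty) ∧
        (∀ i j, i ≠ j → Disjoint (S i) (S j)) ∧
        ∀ i, ConnOn w (S i)},
      ⨆ i, phiS μ w σ (P.1 i)) := by
  
  haveI hfk : Nonempty (Fin k) := Fin.pos_iff_nonempty.1 hk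
  obtain ⟨f⟩ : Nonempty (Fin k ↪ V) :=
    Function.Embedding.nonempty_of_card_le (by simpa using hk')
  have hsup_nn : ∀ S : Fin k → Finset V, 0 ≤ ⨆ i, phiS μ w σ (S i) := fun S =>
    le_ciSup_of_le (Set.finite_range _).bddAbove (Classical.arbitrary (Fin k))
      (phiS_nonneg μ w σ hμ hw_nn _)
  have bdd1 : BddBelow (Set.range fun P : {S : Fin k → Finset V //
      (∀ i, (S i).Nonempty) ∧
      ∀ i j, i ≠ j → Disjoint (S i) (S j)} => ⨆ i, phiS μ w σ (P.1 i)) :=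
    ⟨0, by rintro _ ⟨P, rfl⟩; exact hsup_nn _⟩
  have bdd2 : BddBelow (Set.range fun P : {S : Fin k → Finset V //
      (∀ i, (S i).Nonempty) ∧
      (∀ i j, i ≠ j → Disjoint (S i) (S j)) ∧
      ∀ i, ConnOn w (S i)} => ⨆ i, phiS μ w σ (P.1 i)) :=
    ⟨0, by rintro _ ⟨P, rfl⟩; exact hsup_nn _⟩
  haveI hne2 : Nonempty {S : Fin k → Finset V //
      (∀ i, (S i).Nonempty) ∧
      (∀ i j, i ≠ j → Disjoint (S i) (S j)) ∧
      ∀ i, ConnOn w (S i)} := by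
    refine ⟨⟨fun i => {f i}, fun i => Finset.singleton_nonempty _, ?_, ?_⟩⟩
    · intro i j hij
      rw [Finset.disjoint_singleton]
      exact fun h => hij (f.injective h)
    · intro i x hx y hy
      rw [Finset.mem_singleton] at hx hy
      rw [hx, hy]
  haveI hne1 : Nonempty {S : Fin k → Finset V //
      (∀ i, (S i).Nonempty) ∧
      ∀ i j, i ≠ j → Disjoint (S i) (S j)} :=
    ⟨⟨hne2.some.1, hne2.some.2.1, hne2.some.2.2.1⟩⟩
  refine le_antisymm ?_ ?_
  · exact le_ciInf fun P => ciInf_le bdd1 ⟨P.1, P.2.1, P.2.2.1⟩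
  · refine le_ciInf fun P => ?_
    obtain ⟨S, hne, hdisj⟩ := P
    choose T hTsub hTne hTconn hTle using
      fun i => exists_good μ w σ hμ hw_symm hw_nn (hne i)
    refine (ciInf_le bdd2 ⟨T, hTne,
      fun i j hij => (hdisj i j hij).mono (hTsub i) (hTsub j), hTconn⟩).trans ?_
    exact ciSup_mono (Set.finite_range _).bddAbove hTle
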